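/- For every integer k ≥ 1, define a_k := (d⁺_k − d⁺_{k+2})² and ε_k := d⁺_k·d⁺_{k+2} + d⁺_{k+2}·d⁺_{k+4} − 2·(d⁺_{k+2})², where d⁺_j := (j−2)²·(j+2)/(4j²), and define λ¹_k := (a_k + a_{k+2} − √((a_k − a_{k+2})² + 4·ε_k²))/2 and λ²_k := (a_k + a_{k+2} + √((a_k − a_{k+2})² + 4·ε_k²))/2. Then for every integer k ≥ 1 one has 1/50 < λ¹_k, λ²_k < 3/5, and 1/50 < a_k < 3/5. In particular the symmetric matrix A_k with diagonal entries a_k, a_{k+2} and off-diagonal entries ε_k is positive definite. -/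

import Mathlib

open Real Matrix

/-- The tridiagonal coefficient `d⁺_j = (j−2)²·(j+2)/(4j²)`. -/
noncomputable def dPlus (j : ℕ) : ℝ :=
  ((j : ℝ) - 2) ^ 2 * ((j : ℝ) + 2) / (4 * (j : ℝ) ^ 2)

/-- The diagonal entry `a_k = (d⁺_k − d⁺_{k+2})²`. -/
noncomputable def aCoeff (k : ℕ) : ℝ := (dPlus k - dPlus (k + 2)) ^ 2

/-- The off-diagonal entry `ε_k = d⁺_k·d⁺_{k+2} + d⁺_{k+2}·d⁺_{k+4} − 2·(d⁺_{k+2})²`. -/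
noncomputable def epsCoeff (k : ℕ) : ℝ :=
  dPlus k * dPlus (k + 2) + dPlus (k + 2) * dPlus (k + 4) - 2 * (dPlus (k + 2)) ^ 2

/-- The smaller eigenvalue of the symmetric matrix `A_k`. -/
noncomputable def lamOne (k : ℕ) : ℝ :=
  (aCoeff k + aCoeff (k + 2) -
      Real.sqrt ((aCoeff k - aCoeff (k + 2)) ^ 2 + 4 * (epsCoeff k) ^ 2)) / 2

/-- The larger eigenvalue of the symmetric matrix `A_k`. -/
noncomputable def lamTwo (k : ℕ) : ℝ :=
  (aCoeff k + aCoeff (k + 2) +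
      Real.sqrt ((aCoeff k - aCoeff (k + 2)) ^ 2 + 4 * (epsCoeff k) ^ 2)) / 2

/-!
Since `d⁺_j = j/4 - 1/2 - 1/j + 2/j²`, the first difference `d⁺_{k+2} - d⁺_k` is `1/2 + O(1/k²)`
and the second difference is `O(1/k³)`; in closed form `ε_k = 2(16 + 16k - k³)/((k+2)⁴(k+4))`.
Hence `9/64 ≤ a_k ≤ 25/64` and `|ε_k| ≤ 1/10` for `k ≥ 2`, and `k = 1` is a direct computation.
Both eigenvalues of `[[a, e], [e, b]]` exceed `m` iff the matrix minus `m` is positive definite,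
i.e. iff `m < a` and `e² < (a - m)(b - m)`; dually, both are below `M` iff `a < M` and
`e² < (M - a)(M - b)`. The coarse bounds on `a_k` and `ε_k` give these with room to spare.
-/

section SymmetricTwoByTwo

variable {a b e m M : ℝ}

theorem lt_add_sub_sqrt_div_two (hma : m < a) (he : e ^ 2 < (a - m) * (b - m)) :
    m < (a + b - √((a - b) ^ 2 + 4 * e ^ 2)) / 2 := by
  have hmb : m < b := by nlinarith [sq_nonneg e]
  have hsqrt : √((a - b) ^ 2 + 4 * e ^ 2) < a + b - 2 * m :=
    (Real.sqrt_lt' (by linarith)).2 (by nlinarith)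
  linarith

theorem add_add_sqrt_div_two_lt (haM : a < M) (he : e ^ 2 < (M - a) * (M - b)) :
    (a + b + √((a - b) ^ 2 + 4 * e ^ 2)) / 2 < M := by
  have hbM : b < M := by nlinarith [sq_nonneg e]
  have hsqrt : √((a - b) ^ 2 + 4 * e ^ 2) < 2 * M - a - b :=
    (Real.sqrt_lt' (by linarith)).2 (by nlinarith)
  linarith

theorem Matrix.posDef_fin_two_of_sq_lt_mul (ha : 0 < a) (he : e ^ 2 < a * b) :
    (!![a, e; e, b] : Matrix (Fin 2) (Fin 2) ℝ).PosDef := by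
  refine Matrix.PosDef.of_dotProduct_mulVec_pos ?_ fun v hv => ?_
  · ext i j; fin_cases i <;> fin_cases j <;> rfl
  simp only [dotProduct, star_trivial, mulVec, of_apply, cons_val', cons_val_fin_one,
    Fin.sum_univ_two, cons_val_zero, cons_val_one]
  have hQ : a * (v 0 * (a * v 0 + e * v 1) + v 1 * (e * v 0 + b * v 1)) =
      (a * v 0 + e * v 1) ^ 2 + (a * b - e ^ 2) * v 1 ^ 2 := by ring
  refine pos_of_mul_pos_right (hQ ▸ ?_) ha.le
  rcases eq_or_ne (v 1) 0 with h1 | h1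
  · have h0 : v 0 ≠ 0 := fun h0 => hv (funext fun i => by fin_cases i <;> simp [h0, h1])
    have : a * v 0 ≠ 0 := mul_ne_zero ha.ne' h0
    simp only [h1, mul_zero, add_zero, zero_pow two_ne_zero]
    positivity
  · have : 0 < a * b - e ^ 2 := by linarith
    positivity

end SymmetricTwoByTwo

theorem dPlus_add_two_sub_dPlus {k : ℕ} (hk : k ≠ 0) :
    dPlus (k + 2) - dPlus k =
      1 / 2 + 2 * ((k : ℝ) ^ 2 - 2 * k - 4) / ((k : ℝ) ^ 2 * ((k : ℝ) + 2) ^ 2) := by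
  have : (k : ℝ) ≠ 0 := Nat.cast_ne_zero.2 hk
  simp only [dPlus]
  push_cast
  field_simp
  ring

theorem epsCoeff_eq {k : ℕ} (hk : k ≠ 0) :
    epsCoeff k = 2 * (16 + 16 * k - (k : ℝ) ^ 3) / (((k : ℝ) + 2) ^ 4 * ((k : ℝ) + 4)) := by
  have : (k : ℝ) ≠ 0 := Nat.cast_ne_zero.2 hk
  simp only [epsCoeff, dPlus]
  push_cast
  field_simp
  ring

theorem dPlus_add_two_sub_dPlus_mem_Icc {k : ℕ} (hk : 2 ≤ k) :
    dPlus (k + 2) - dPlus k ∈ Set.Icc (3 / 8) (5 / 8) := by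
  obtain ⟨n, rfl⟩ := Nat.exists_eq_add_of_le' hk
  have h : |2 * (((n + 2 : ℕ) : ℝ) ^ 2 - 2 * ((n + 2 : ℕ) : ℝ) - 4) /
      (((n + 2 : ℕ) : ℝ) ^ 2 * (((n + 2 : ℕ) : ℝ) + 2) ^ 2)| ≤ 1 / 8 := by
    rw [abs_le, le_div_iff₀ (by positivity), div_le_iff₀ (by positivity)]
    push_cast
    constructor
    all_goals rw [← sub_nonneg]; ring_nf; positivity
  rw [dPlus_add_two_sub_dPlus (by omega)]
  constructor <;> linarith [abs_le.1 h]

theorem aCoeff_mem_Icc {k : ℕ} (hk : 2 ≤ k) : aCoeff k ∈ Set.Icc (9 / 64) (25 / 64) := by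
  obtain ⟨h38, h58⟩ := dPlus_add_two_sub_dPlus_mem_Icc hk
  rw [aCoeff, ← neg_sub, neg_sq]
  constructor <;> nlinarith

theorem abs_epsCoeff_le {k : ℕ} (hk : 2 ≤ k) : |epsCoeff k| ≤ 1 / 10 := by
  obtain ⟨n, rfl⟩ := Nat.exists_eq_add_of_le' hk
  rw [epsCoeff_eq (by omega), abs_le, le_div_iff₀ (by positivity), div_le_iff₀ (by positivity)]
  push_cast
  constructor
  all_goals rw [← sub_nonneg]; ring_nf; positivity

theorem aCoeff_mem_Ioo {k : ℕ} (hk : 1 ≤ k) : aCoeff k ∈ Set.Ioo (1 / 50) (3 / 5) := by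
  rcases hk.eq_or_lt with rfl | hk
  · norm_num [aCoeff, dPlus]
  · obtain ⟨hlo, hhi⟩ := aCoeff_mem_Icc hk
    constructor <;> linarith

theorem epsCoeff_sq_lt {k : ℕ} (hk : 1 ≤ k) :
    epsCoeff k ^ 2 < (aCoeff k - 1 / 50) * (aCoeff (k + 2) - 1 / 50) ∧
      epsCoeff k ^ 2 < (3 / 5 - aCoeff k) * (3 / 5 - aCoeff (k + 2)) := by
  rcases hk.eq_or_lt with rfl | hk
  · norm_num [epsCoeff, aCoeff, dPlus]
  · have he := abs_le.1 (abs_epsCoeff_le hk)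
    have he2 := sq_le_sq' he.1 he.2
    obtain ⟨ha1, ha2⟩ := aCoeff_mem_Icc hk
    obtain ⟨hb1, hb2⟩ := aCoeff_mem_Icc (k := k + 2) (by omega)
    constructor <;> nlinarith

/-- For every `k ≥ 1`: `1/50 < λ¹_k, λ²_k < 3/5`, `1/50 < a_k < 3/5`, and the symmetric
matrix `A_k = [[a_k, ε_k], [ε_k, a_{k+2}]]` is positive definite. -/
theorem eigenvalue_bounds (k : ℕ) (hk : 1 ≤ k) :
    (1 / 50 < lamOne k ∧ lamOne k < 3 / 5) ∧
      (1 / 50 < lamTwo k ∧ lamTwo k < 3 / 5) ∧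
      (1 / 50 < aCoeff k ∧ aCoeff k < 3 / 5) ∧
      (!![aCoeff k, epsCoeff k; epsCoeff k, aCoeff (k + 2)] : Matrix (Fin 2) (Fin 2) ℝ).PosDef := by
  obtain ⟨ha, ha'⟩ := aCoeff_mem_Ioo hk
  obtain ⟨hb, -⟩ := aCoeff_mem_Ioo (k := k + 2) (by omega)
  obtain ⟨hlo, hup⟩ := epsCoeff_sq_lt hk
  have hlamOne : 1 / 50 < lamOne k := lt_add_sub_sqrt_div_two ha hlo
  have hlamTwo : lamTwo k < 3 / 5 := add_add_sqrt_div_two_lt ha' hup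
  have hle : lamOne k ≤ lamTwo k := by
    unfold lamOne lamTwo
    linarith [Real.sqrt_nonneg ((aCoeff k - aCoeff (k + 2)) ^ 2 + 4 * epsCoeff k ^ 2)]
  refine ⟨⟨hlamOne, by linarith⟩, ⟨by linarith, hlamTwo⟩, ⟨ha, ha'⟩, ?_⟩
  exact Matrix.posDef_fin_two_of_sq_lt_mul (by linarith) (by nlinarith)
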